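/- Let N ≥ 2 and let Ω ⊂ ℝ^N be an open bounded convex set. Then there exists exactly one proximal center of Ω, i.e. there is a unique point x_Ω ∈ M(Ω) such that Ω ⊂ B_{L_Ω}(x_Ω). Moreover, the proximal radius satisfies L_Ω = inf_{x ∈ M(Ω)} ( max_{y ∈ ∂Ω} |x − y| ), and this infimum is attained at the proximal center. -/
import Mathlib


open MeasureTheory Metric Set
open scoped ENNReal NNReal

noncomputable section

/-- The inradius `r_Ω = sup_{x ∈ Ω} dist(x, ∂Ω)`. -/
def inradius {N : ℕ} (Ω : Set (EuclideanSpace ℝ (Fin N))) : ℝ :=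
  sSup ((fun x => infDist x (frontier Ω)) '' Ω)

/-- The high ridge set `M(Ω) = {x ∈ Ω : B_{r_Ω}(x) ⊆ Ω}` of centers of maximal
inscribed balls. -/
def highRidge {N : ℕ} (Ω : Set (EuclideanSpace ℝ (Fin N))) :
    Set (EuclideanSpace ℝ (Fin N)) :=
  {x ∈ Ω | ball x (inradius Ω) ⊆ Ω}

/-- The proximal radius `L_Ω = inf { R > 0 : ∃ x₀ ∈ M(Ω), Ω ⊆ B_R(x₀) }`. -/
def proxRadius {N : ℕ} (Ω : Set (EuclideanSpace ℝ (Fin N))) : ℝ :=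
  sInf { R | 0 < R ∧ ∃ x₀ ∈ highRidge Ω, Ω ⊆ ball x₀ R }

section AuxProx

open Filter Topology

variable {N : ℕ} {Ω : Set (EuclideanSpace ℝ (Fin N))}

lemma auxP_frontier_nonempty (hN : 2 ≤ N) (hΩb : Bornology.IsBounded Ω)
    (hΩne : Ω.Nonempty) : (frontier Ω).Nonempty := by
  haveI : Nonempty (Fin N) := ⟨⟨0, by omega⟩⟩
  rw [Set.nonempty_iff_ne_empty]
  intro h
  rcases frontier_eq_empty_iff.mp h with h' | h'
  · exact hΩne.ne_empty h'
  · exact NormedSpace.unbounded_univ ℝ (EuclideanSpace ℝ (Fin N)) (h' ▸ hΩb)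

lemma auxP_bddAbove (hΩb : Bornology.IsBounded Ω) (x : EuclideanSpace ℝ (Fin N)) :
    BddAbove ((dist x) '' frontier Ω) := by
  obtain ⟨R, hR⟩ := hΩb.closure.subset_closedBall x
  refine ⟨R, ?_⟩
  rintro r ⟨z, hz, rfl⟩
  have := hR (frontier_subset_closure hz)
  simpa [mem_closedBall, dist_comm] using this

/-- Key geometric fact: for `x, y ∈ Ω`, the distance from `x` to `y` is strictly less
than the sup of distances from `x` to the frontier. -/
lemma auxP_lt_sup (hN : 2 ≤ N) (hΩo : IsOpen Ω) (hΩb : Bornology.IsBounded Ω)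
    (hΩne : Ω.Nonempty) {x y : EuclideanSpace ℝ (Fin N)} (hx : x ∈ Ω) (hy : y ∈ Ω) :
    dist x y < sSup ((dist x) '' frontier Ω) := by
  obtain ⟨z₀, hz₀⟩ := auxP_frontier_nonempty hN hΩb hΩne
  have hbdd := auxP_bddAbove hΩb x
  have hfrΩ : ∀ z ∈ frontier Ω, z ∉ Ω := by
    intro z hz hzΩ
    rw [hΩo.frontier_eq] at hz
    exact hz.2 hzΩ
  by_cases hxy : x = y
  · subst hxy
    have hxz : x ≠ z₀ := fun h => hfrΩ z₀ hz₀ (h ▸ hx)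
    calc dist x x = 0 := dist_self x
    _ < dist x z₀ := dist_pos.2 hxz
    _ ≤ _ := le_csSup hbdd ⟨z₀, hz₀, rfl⟩
  · -- ray argument
    set φ : ℝ → EuclideanSpace ℝ (Fin N) := fun t => x + t • (y - x) with hφ
    have hφc : Continuous φ := by
      exact continuous_const.add (continuous_id.smul continuous_const)
    set S : Set ℝ := φ ⁻¹' Ω with hS
    have hSopen : IsOpen S := hΩo.preimage hφc
    have h1S : (1 : ℝ) ∈ S := by
      simp only [hS, Set.mem_preimage, hφ, one_smul]
      convert hy using 2
      abel
    have hne : ‖y - x‖ ≠ 0 := by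
      simpa [sub_eq_zero] using fun h => hxy h.symm
    have hnpos : 0 < ‖y - x‖ := lt_of_le_of_ne (norm_nonneg _) (Ne.symm hne)
    have hSbdd : BddAbove S := by
      obtain ⟨R, hR⟩ := hΩb.subset_closedBall x
      refine ⟨R / ‖y - x‖, fun t ht => ?_⟩
      have := hR ht
      rw [mem_closedBall, dist_eq_norm] at this
      have h2 : ‖φ t - x‖ = |t| * ‖y - x‖ := by
        simp only [hφ, add_sub_cancel_left, norm_smul, Real.norm_eq_abs]
      have : |t| * ‖y - x‖ ≤ R := h2 ▸ this
      calc t ≤ |t| := le_abs_self t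
      _ ≤ R / ‖y - x‖ := (le_div_iff₀ hnpos).2 this
    set T := sSup S with hT
    have hge : ∀ s ∈ S, ∃ δ > 0, s + δ ∈ S := by
      intro s hs
      obtain ⟨δ, hδ, hball⟩ := Metric.isOpen_iff.1 hSopen s hs
      refine ⟨δ / 2, by positivity, hball ?_⟩
      rw [mem_ball, Real.dist_eq, show s + δ / 2 - s = δ / 2 by ring,
        abs_of_pos (by linarith)]
      linarith
    have hT1 : 1 < T := by
      obtain ⟨δ, hδ, hmem⟩ := hge 1 h1S
      have := le_csSup hSbdd hmem
      linarith
    have hTpos : 0 < T := lt_trans one_pos hT1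
    have hznotΩ : φ T ∉ Ω := by
      intro hmem
      obtain ⟨δ, hδ, hmem'⟩ := hge T hmem
      have := le_csSup hSbdd hmem'
      linarith
    have hzclos : φ T ∈ closure Ω := by
      obtain ⟨u, -, hulim, humem⟩ := exists_seq_tendsto_sSup ⟨1, h1S⟩ hSbdd
      exact mem_closure_of_tendsto ((hφc.tendsto T).comp hulim)
        (Filter.Eventually.of_forall fun n => humem n)
    have hzfr : φ T ∈ frontier Ω := by
      rw [hΩo.frontier_eq]; exact ⟨hzclos, hznotΩ⟩
    have hdz : dist x (φ T) = T * dist x y := by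
      rw [dist_eq_norm, dist_eq_norm, hφ]
      simp only
      rw [show x - (x + T • (y - x)) = T • (x - y) by module, norm_smul,
        Real.norm_eq_abs, abs_of_pos hTpos]
    have hdxy : 0 < dist x y := dist_pos.2 hxy
    calc dist x y < T * dist x y := by nlinarith
    _ = dist x (φ T) := hdz.symm
    _ ≤ _ := le_csSup hbdd ⟨φ T, hzfr, rfl⟩

lemma auxP_sup_pos (hN : 2 ≤ N) (hΩo : IsOpen Ω) (hΩb : Bornology.IsBounded Ω)
    (hΩne : Ω.Nonempty) {x : EuclideanSpace ℝ (Fin N)} (hx : x ∈ Ω) :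
    0 < sSup ((dist x) '' frontier Ω) := by
  have := auxP_lt_sup hN hΩo hΩb hΩne hx hx
  simpa using this

lemma auxP_subset_ball (hN : 2 ≤ N) (hΩo : IsOpen Ω) (hΩb : Bornology.IsBounded Ω)
    (hΩne : Ω.Nonempty) {x : EuclideanSpace ℝ (Fin N)} (hx : x ∈ Ω) :
    Ω ⊆ ball x (sSup ((dist x) '' frontier Ω)) := by
  intro y hy
  rw [mem_ball, dist_comm]
  exact auxP_lt_sup hN hΩo hΩb hΩne hx hy

lemma auxP_sup_le (hN : 2 ≤ N) (hΩb : Bornology.IsBounded Ω) (hΩne : Ω.Nonempty)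
    {x : EuclideanSpace ℝ (Fin N)} {R : ℝ} (h : Ω ⊆ ball x R) :
    sSup ((dist x) '' frontier Ω) ≤ R := by
  obtain ⟨z₀, hz₀⟩ := auxP_frontier_nonempty hN hΩb hΩne
  refine csSup_le ⟨dist x z₀, ⟨z₀, hz₀, rfl⟩⟩ ?_
  rintro r ⟨z, hz, rfl⟩
  have hz' : z ∈ closedBall x R :=
    (closure_mono h).trans closure_ball_subset_closedBall (frontier_subset_closure hz)
  rw [mem_closedBall, dist_comm] at hz'
  exact hz'

lemma auxP_bddAbove_inf (hN : 2 ≤ N) (hΩb : Bornology.IsBounded Ω) (hΩne : Ω.Nonempty) :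
    BddAbove ((fun x => infDist x (frontier Ω)) '' Ω) := by
  obtain ⟨z₀, hz₀⟩ := auxP_frontier_nonempty hN hΩb hΩne
  obtain ⟨R, hR⟩ := hΩb.subset_closedBall z₀
  refine ⟨R, ?_⟩
  rintro r ⟨x, hx, rfl⟩
  exact (infDist_le_dist_of_mem hz₀).trans (by simpa [mem_closedBall] using hR hx)

lemma auxP_inradius_pos (hN : 2 ≤ N) (hΩo : IsOpen Ω) (hΩb : Bornology.IsBounded Ω)
    (hΩne : Ω.Nonempty) : 0 < inradius Ω := by
  obtain ⟨x, hx⟩ := hΩne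
  obtain ⟨ε, hε, hball⟩ := Metric.isOpen_iff.1 hΩo x hx
  have hFne := auxP_frontier_nonempty hN hΩb ⟨x, hx⟩
  have h1 : ε ≤ infDist x (frontier Ω) := by
    by_contra h
    push_neg at h
    obtain ⟨z, hz, hlt⟩ := (infDist_lt_iff hFne).1 h
    have hzΩ : z ∈ Ω := hball (by rwa [mem_ball, dist_comm])
    rw [hΩo.frontier_eq] at hz
    exact hz.2 hzΩ
  have h2 := le_csSup (auxP_bddAbove_inf hN hΩb ⟨x, hx⟩) ⟨x, hx, rfl⟩
  have : ε ≤ inradius Ω := le_trans h1 h2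
  linarith

lemma auxP_ball_infDist_subset (hΩo : IsOpen Ω) {x : EuclideanSpace ℝ (Fin N)}
    (hx : x ∈ Ω) : ball x (infDist x (frontier Ω)) ⊆ Ω := by
  rcases le_or_gt (infDist x (frontier Ω)) 0 with h | h
  · simp [ball_eq_empty.2 h]
  refine IsPreconnected.subset_left_of_subset_union (u := Ω) (v := (closure Ω)ᶜ) hΩo
    (isOpen_compl_iff.2 isClosed_closure) ?_ ?_ ?_ (convex_ball x _).isPreconnected
  · exact disjoint_compl_right.mono_left subset_closure
  · intro y hy
    have hynfr : y ∉ frontier Ω := disjoint_left.1 disjoint_ball_infDist hy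
    by_cases hyc : y ∈ closure Ω
    · left
      rcases (closure_eq_interior_union_frontier Ω ▸ hyc) with h' | h'
      · rwa [hΩo.interior_eq] at h'
      · exact absurd h' hynfr
    · right; exact hyc
  · exact ⟨x, mem_ball_self h, hx⟩

lemma auxP_highRidge_nonempty (hN : 2 ≤ N) (hΩo : IsOpen Ω)
    (hΩb : Bornology.IsBounded Ω) (hΩne : Ω.Nonempty) : (highRidge Ω).Nonempty := by
  have hcc : IsCompact (closure Ω) := hΩb.isCompact_closure
  obtain ⟨x₀, hx₀c, hmax⟩ := hcc.exists_isMaxOn hΩne.closure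
    (continuous_infDist_pt (frontier Ω)).continuousOn
  have hr_le : inradius Ω ≤ infDist x₀ (frontier Ω) := by
    apply csSup_le (hΩne.image _)
    rintro r ⟨x, hx, rfl⟩
    exact hmax (subset_closure hx)
  have hrpos := auxP_inradius_pos hN hΩo hΩb hΩne
  have hx₀Ω : x₀ ∈ Ω := by
    rcases (closure_eq_interior_union_frontier Ω ▸ hx₀c) with h' | h'
    · rwa [hΩo.interior_eq] at h'
    · exfalso
      have := infDist_zero_of_mem h'
      linarith
  exact ⟨x₀, hx₀Ω, (ball_subset_ball hr_le).trans (auxP_ball_infDist_subset hΩo hx₀Ω)⟩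

lemma auxP_highRidge_closed (hr : 0 < inradius Ω) : IsClosed (highRidge Ω) := by
  apply isClosed_of_closure_subset
  intro x hx
  have hball : ball x (inradius Ω) ⊆ Ω := by
    intro y hy
    rw [mem_ball] at hy
    obtain ⟨x', hx', hdx⟩ := Metric.mem_closure_iff.1 hx (inradius Ω - dist y x)
      (by linarith)
    refine hx'.2 ?_
    rw [mem_ball]
    calc dist y x' ≤ dist y x + dist x x' := dist_triangle _ _ _
    _ < inradius Ω := by linarith
  exact ⟨hball (mem_ball_self hr), hball⟩

lemma auxP_highRidge_convex (hΩcvx : Convex ℝ Ω) : Convex ℝ (highRidge Ω) := by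
  intro x₁ hx₁ x₂ hx₂ a b ha hb hab
  refine ⟨hΩcvx hx₁.1 hx₂.1 ha hb hab, ?_⟩
  intro y hy
  rw [mem_ball] at hy
  set m := a • x₁ + b • x₂ with hm
  have h₁ : x₁ + (y - m) ∈ Ω := by
    apply hx₁.2
    rw [mem_ball, dist_eq_norm, add_sub_cancel_left, ← dist_eq_norm]
    exact hy
  have h₂ : x₂ + (y - m) ∈ Ω := by
    apply hx₂.2
    rw [mem_ball, dist_eq_norm, add_sub_cancel_left, ← dist_eq_norm]
    exact hy
  have hy' : y = a • (x₁ + (y - m)) + b • (x₂ + (y - m)) := by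
    rw [hm, show (a : ℝ) = 1 - b from by linarith]
    module
  rw [hy']
  exact hΩcvx h₁ h₂ ha hb hab

end AuxProx

/-- Lemma A.1: an open bounded convex set has a unique proximal center. -/
theorem proximal_center_exists_unique
    {N : ℕ} (hN : 2 ≤ N)
    (Ω : Set (EuclideanSpace ℝ (Fin N))) (hΩo : IsOpen Ω)
    (hΩb : Bornology.IsBounded Ω) (hΩne : Ω.Nonempty) (hΩcvx : Convex ℝ Ω) :
    (∃! x : EuclideanSpace ℝ (Fin N),
        x ∈ highRidge Ω ∧ Ω ⊆ ball x (proxRadius Ω)) ∧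
    proxRadius Ω = sInf { r | ∃ x ∈ highRidge Ω, r = sSup ((dist x) '' frontier Ω) } ∧
    (∀ x ∈ highRidge Ω, Ω ⊆ ball x (proxRadius Ω) →
      sSup ((dist x) '' frontier Ω) = proxRadius Ω) := by
  classical
  have hFne : (frontier Ω).Nonempty := auxP_frontier_nonempty hN hΩb hΩne
  set f : EuclideanSpace ℝ (Fin N) → ℝ := fun x => sSup ((dist x) '' frontier Ω)
    with hfdef
  have hbdd : ∀ x, BddAbove ((dist x) '' frontier Ω) := auxP_bddAbove hΩb
  have hfcont : Continuous f := by
    apply LipschitzWith.continuous (LipschitzWith.of_le_add ?_)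
    intro x y
    refine csSup_le (hFne.image _) ?_
    rintro r ⟨z, hz, rfl⟩
    have h1 : dist x z ≤ dist x y + dist y z := dist_triangle _ _ _
    have h2 : dist y z ≤ f y := le_csSup (hbdd y) ⟨z, hz, rfl⟩
    linarith
  have hrpos := auxP_inradius_pos hN hΩo hΩb hΩne
  have hMne := auxP_highRidge_nonempty hN hΩo hΩb hΩne
  have hMcpt : IsCompact (highRidge Ω) :=
    hΩb.isCompact_closure.of_isClosed_subset (auxP_highRidge_closed hrpos)
      (fun x hx => subset_closure hx.1)
  obtain ⟨xm, hxmM, hmin⟩ := hMcpt.exists_isMinOn hMne hfcont.continuousOn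
  set L₀ := f xm with hL₀
  have hkey1 : ∀ x ∈ highRidge Ω, Ω ⊆ ball x (f x) := fun x hx =>
    auxP_subset_ball hN hΩo hΩb hΩne hx.1
  have hkey2 : ∀ (x : EuclideanSpace ℝ (Fin N)) (R : ℝ), Ω ⊆ ball x R → f x ≤ R :=
    fun x R h => auxP_sup_le hN hΩb hΩne h
  have hL₀pos : 0 < L₀ := auxP_sup_pos hN hΩo hΩb hΩne hxmM.1
  have hL₀S : L₀ ∈ { R | 0 < R ∧ ∃ x₀ ∈ highRidge Ω, Ω ⊆ ball x₀ R } :=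
    ⟨hL₀pos, xm, hxmM, hkey1 xm hxmM⟩
  have hlb : ∀ R ∈ { R | 0 < R ∧ ∃ x₀ ∈ highRidge Ω, Ω ⊆ ball x₀ R }, L₀ ≤ R := by
    rintro R ⟨hR, x, hxM, hsub⟩
    exact le_trans (hmin hxM) (hkey2 x R hsub)
  have hL : proxRadius Ω = L₀ := by
    unfold proxRadius
    exact le_antisymm (csInf_le ⟨L₀, hlb⟩ hL₀S) (le_csInf ⟨L₀, hL₀S⟩ hlb)
  have hpart3 : ∀ x ∈ highRidge Ω, Ω ⊆ ball x (proxRadius Ω) →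
      sSup ((dist x) '' frontier Ω) = proxRadius Ω := by
    intro x hxM hsub
    rw [hL] at hsub ⊢
    exact le_antisymm (hkey2 x L₀ hsub) (hmin hxM)
  have hxmball : Ω ⊆ ball xm (proxRadius Ω) := by rw [hL]; exact hkey1 xm hxmM
  have huniq : ∀ y : EuclideanSpace ℝ (Fin N),
      (y ∈ highRidge Ω ∧ Ω ⊆ ball y (proxRadius Ω)) → y = xm := by
    rintro x₁ ⟨h₁M, h₁b⟩
    have hf₁ : f x₁ = L₀ := by
      have h := hpart3 x₁ h₁M h₁b
      rw [hL] at h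
      exact h
    by_contra hne
    have hd : 0 < dist x₁ xm := dist_pos.2 hne
    set m := (1/2 : ℝ) • x₁ + (1/2 : ℝ) • xm with hm
    have hmM : m ∈ highRidge Ω :=
      auxP_highRidge_convex hΩcvx h₁M hxmM (by norm_num) (by norm_num) (by norm_num)
    have hfm : ∀ z ∈ frontier Ω, dist m z ^ 2 ≤ L₀ ^ 2 - dist x₁ xm ^ 2 / 4 := by
      intro z hz
      have h1 : dist x₁ z ≤ L₀ := hf₁ ▸ le_csSup (hbdd x₁) ⟨z, hz, rfl⟩
      have h2 : dist xm z ≤ L₀ := le_csSup (hbdd xm) ⟨z, hz, rfl⟩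
      have hpar := parallelogram_law_with_norm ℝ (x₁ - z) (xm - z)
      have hmz : m - z = (1/2 : ℝ) • ((x₁ - z) + (xm - z)) := by
        rw [hm]; module
      have e1 : dist m z = (1/2 : ℝ) * ‖(x₁ - z) + (xm - z)‖ := by
        rw [dist_eq_norm, hmz, norm_smul, Real.norm_eq_abs]
        norm_num
      have e2 : dist x₁ z = ‖x₁ - z‖ := dist_eq_norm _ _
      have e3 : dist xm z = ‖xm - z‖ := dist_eq_norm _ _
      have e4 : dist x₁ xm = ‖(x₁ - z) - (xm - z)‖ := by
        rw [dist_eq_norm]; congr 1; abel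
      rw [e1, e4]
      rw [e2] at h1; rw [e3] at h2
      nlinarith [norm_nonneg ((x₁ - z) + (xm - z)), norm_nonneg ((x₁ - z) - (xm - z)),
        norm_nonneg (x₁ - z), norm_nonneg (xm - z)]
    have hfmle : f m ≤ Real.sqrt (L₀ ^ 2 - dist x₁ xm ^ 2 / 4) := by
      refine csSup_le (hFne.image _) ?_
      rintro r ⟨z, hz, rfl⟩
      exact Real.le_sqrt_of_sq_le (hfm z hz)
    have hL₀le : L₀ ≤ f m := hmin hmM
    have hchain := hL₀le.trans hfmle
    rcases le_or_gt 0 (L₀ ^ 2 - dist x₁ xm ^ 2 / 4) with hnn | hneg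
    · have := (Real.le_sqrt hL₀pos.le hnn).1 hchain
      nlinarith
    · rw [Real.sqrt_eq_zero_of_nonpos hneg.le] at hchain
      linarith
  refine ⟨⟨xm, ⟨hxmM, hxmball⟩, huniq⟩, ?_, hpart3⟩
  have hTeq : { r | ∃ x ∈ highRidge Ω, r = sSup ((dist x) '' frontier Ω) }
      = f '' highRidge Ω := by
    ext r
    simp only [hfdef, Set.mem_setOf_eq, Set.mem_image]
    constructor
    · rintro ⟨x, hx, rfl⟩; exact ⟨x, hx, rfl⟩
    · rintro ⟨x, hx, rfl⟩; exact ⟨x, hx, rfl⟩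
  rw [hL, hTeq]
  refine le_antisymm (le_csInf ⟨L₀, xm, hxmM, rfl⟩ ?_) (csInf_le ⟨L₀, ?_⟩ ⟨xm, hxmM, rfl⟩)
  · rintro r ⟨x, hxM, rfl⟩; exact hmin hxM
  · rintro r ⟨x, hxM, rfl⟩; exact hmin hxM
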